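/- For A < 0 and ε ∈ (0,1), the clipped surrogate f(r) = min(r·A, clip(r, 1-ε, 1+ε)·A) is constant (equal to (1-ε)·A) for all r ≤ 1-ε, while the smoothed surrogate g(r) = ((1-α)r + α)·A with α ∈ [0,1) is strictly decreasing on all of ℝ. -/
import Mathlib


theorem clipped_plateau_vs_smoothed_strict_anti
    (A ε α : ℝ) (hA : A < 0) (hε : ε ∈ Set.Ioo (0:ℝ) 1)
    (hα : α ∈ Set.Ico (0:ℝ) 1) :
    (∀ r : ℝ, r ≤ 1 - ε →
      min (r * A) (max (1 - ε) (min r (1 + ε)) * A) = (1 - ε) * A) ∧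
    StrictAnti (fun r : ℝ => ((1 - α) * r + α) * A) := by
  obtain ⟨hε0, hε1⟩ := hε
  obtain ⟨hα0, hα1⟩ := hα
  constructor
  · intro r hr
    have h1 : min r (1 + ε) = r := min_eq_left (by linarith)
    have h2 : max (1 - ε) r = 1 - ε := max_eq_left hr
    rw [h1, h2]
    exact min_eq_right (mul_le_mul_of_nonpos_right hr (le_of_lt hA))
  · intro x y hxy
    have : (1 - α) * x < (1 - α) * y := by nlinarith
    simp only
    nlinarith
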